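/- Let d and m be positive integers, σ > 0, η > 0. Let Σ_q and Σ₀ be symmetric positive definite d×d real matrices and let G₁, …, G_m be symmetric positive definite d×d real matrices. Let T ⊆ {1, …, m} be a subset of tasks, each sufficiently explored in the sense that λ_d(G_z) ≥ η/σ² for all z ∈ T. Then λ_d(Σ_q⁻¹ + Σ_{z=1}^{m} (Σ₀ + G_z⁻¹)⁻¹) ≥ λ_d(Σ_q⁻¹) + |T| · (λ₁(Σ₀) + σ²/η)⁻¹, where λ₁(M) and λ_d(M) denote the maximum and minimum eigenvalue of a symmetric d×d real matrix M. -/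

import Mathlib

open Matrix Real

/-- Maximum eigenvalue λ₁ of a symmetric (Hermitian) real matrix. -/
noncomputable def maxEig {d : ℕ} (M : Matrix (Fin d) (Fin d) ℝ) : ℝ :=
  if h : M.IsHermitian then ⨆ i, h.eigenvalues i else 0

/-- Minimum eigenvalue λ_d of a symmetric (Hermitian) real matrix. -/
noncomputable def minEig {d : ℕ} (M : Matrix (Fin d) (Fin d) ℝ) : ℝ :=
  if h : M.IsHermitian then ⨅ i, h.eigenvalues i else 0

/-- The positive semidefinite square root of a positive semidefinite matrix
(junk value `1` otherwise). -/
noncomputable def matSqrt {d : ℕ} (M : Matrix (Fin d) (Fin d) ℝ) : Matrix (Fin d) (Fin d) ℝ :=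
  @dite _ M.PosSemidef (Classical.propDecidable _) (fun h => h.1.eigenvectorUnitary.1 *
    diagonal ((RCLike.ofReal : ℝ → ℝ) ∘ Real.sqrt ∘ h.1.eigenvalues) *
    (star h.1.eigenvectorUnitary : Matrix (Fin d) (Fin d) ℝ)) (fun _ => 1)

section Aux

variable {d : ℕ}

lemma dot_self_eigenbasis {M : Matrix (Fin d) (Fin d) ℝ} (h : M.IsHermitian) (i : Fin d) :
    ⇑(h.eigenvectorBasis i) ⬝ᵥ ⇑(h.eigenvectorBasis i) = 1 := by
  have h1 : ‖h.eigenvectorBasis i‖ = 1 := h.eigenvectorBasis.orthonormal.1 i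
  have h2 : (inner ℝ (h.eigenvectorBasis i) (h.eigenvectorBasis i) : ℝ) = 1 := by
    rw [real_inner_self_eq_norm_sq, h1]; norm_num
  rw [EuclideanSpace.inner_eq_star_dotProduct] at h2
  simpa using h2

lemma minEig_le_eig {M : Matrix (Fin d) (Fin d) ℝ} (h : M.IsHermitian) (i : Fin d) :
    minEig M ≤ h.eigenvalues i := by
  rw [minEig, dif_pos h]
  exact ciInf_le (Finite.bddBelow_range _) i

lemma eig_le_maxEig {M : Matrix (Fin d) (Fin d) ℝ} (h : M.IsHermitian) (i : Fin d) :
    h.eigenvalues i ≤ maxEig M := by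
  rw [maxEig, dif_pos h]
  exact le_ciSup (Finite.bddAbove_range _) i

lemma exists_minEig (hd : 0 < d) {M : Matrix (Fin d) (Fin d) ℝ} (h : M.IsHermitian) :
    ∃ i, h.eigenvalues i = minEig M := by
  haveI : Nonempty (Fin d) := ⟨⟨0, hd⟩⟩
  rw [minEig, dif_pos h]
  exact exists_eq_ciInf_of_finite

lemma exists_maxEig (hd : 0 < d) {M : Matrix (Fin d) (Fin d) ℝ} (h : M.IsHermitian) :
    ∃ i, h.eigenvalues i = maxEig M := by
  haveI : Nonempty (Fin d) := ⟨⟨0, hd⟩⟩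
  rw [maxEig, dif_pos h]
  exact exists_eq_ciSup_of_finite

/-- Quadratic form expansion via the spectral theorem. -/
lemma quad_eq {M : Matrix (Fin d) (Fin d) ℝ} (h : M.IsHermitian) (x : Fin d → ℝ) :
    x ⬝ᵥ (M *ᵥ x) = ∑ i, h.eigenvalues i *
        ((star (h.eigenvectorUnitary : Matrix (Fin d) (Fin d) ℝ) *ᵥ x) i) ^ 2 ∧
      x ⬝ᵥ x = ∑ i, ((star (h.eigenvectorUnitary : Matrix (Fin d) (Fin d) ℝ) *ᵥ x) i) ^ 2 := by
  set U : Matrix (Fin d) (Fin d) ℝ := (h.eigenvectorUnitary : Matrix (Fin d) (Fin d) ℝ) with hU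
  have hmem := h.eigenvectorUnitary.2
  rw [Unitary.mem_iff] at hmem
  set y : Fin d → ℝ := star U *ᵥ x with hy
  have hUy : U *ᵥ y = x := by
    rw [hy, mulVec_mulVec, hmem.2, one_mulVec]
  have hstar : star U = Uᵀ := by
    rw [star_eq_conjTranspose, conjTranspose_eq_transpose_of_trivial]
  constructor
  · conv_lhs => rw [h.spectral_theorem, Unitary.conjStarAlgAut_apply]
    rw [← mulVec_mulVec, ← mulVec_mulVec, dotProduct_mulVec]
    have hxU : x ᵥ* U = y := by rw [hy, hstar, mulVec_transpose]
    rw [hxU]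
    simp only [mulVec_diagonal, dotProduct, Function.comp_apply, RCLike.ofReal_real_eq_id, id_eq]
    congr 1; ext i; ring
  · conv_lhs => rw [← hUy]
    rw [dotProduct_mulVec]
    have h3 : (U *ᵥ y) ᵥ* U = y := by
      rw [← mulVec_transpose, mulVec_mulVec, ← hstar, hmem.1, one_mulVec]
    rw [h3, dotProduct]
    congr 1; ext i; ring

lemma quad_ge_min {M : Matrix (Fin d) (Fin d) ℝ} (h : M.IsHermitian) (x : Fin d → ℝ) :
    minEig M * (x ⬝ᵥ x) ≤ x ⬝ᵥ (M *ᵥ x) := by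
  obtain ⟨h1, h2⟩ := quad_eq h x
  rw [h1, h2, Finset.mul_sum]
  exact Finset.sum_le_sum fun i _ =>
    mul_le_mul_of_nonneg_right (minEig_le_eig h i) (sq_nonneg _)

lemma quad_le_max {M : Matrix (Fin d) (Fin d) ℝ} (h : M.IsHermitian) (x : Fin d → ℝ) :
    x ⬝ᵥ (M *ᵥ x) ≤ maxEig M * (x ⬝ᵥ x) := by
  obtain ⟨h1, h2⟩ := quad_eq h x
  rw [h1, h2, Finset.mul_sum]
  exact Finset.sum_le_sum fun i _ =>
    mul_le_mul_of_nonneg_right (eig_le_maxEig h i) (sq_nonneg _)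

lemma quad_eigen {M : Matrix (Fin d) (Fin d) ℝ} (h : M.IsHermitian) (i : Fin d) :
    ⇑(h.eigenvectorBasis i) ⬝ᵥ (M *ᵥ ⇑(h.eigenvectorBasis i)) = h.eigenvalues i := by
  rw [h.mulVec_eigenvectorBasis]
  rw [dotProduct_smul, dot_self_eigenbasis h i]
  simp

lemma quad_nonneg_of_psd {M : Matrix (Fin d) (Fin d) ℝ} (h : M.PosSemidef) (x : Fin d → ℝ) :
    0 ≤ x ⬝ᵥ (M *ᵥ x) := by
  simpa using h.dotProduct_mulVec_nonneg x

/-- Eigenvectors of `A⁻¹` are eigenvectors of `A` with inverted eigenvalue, for `A` pos. def. -/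
lemma inv_eig_vec {A : Matrix (Fin d) (Fin d) ℝ} (hA : A.PosDef) (i : Fin d) :
    A *ᵥ ⇑((hA.inv.1).eigenvectorBasis i) =
      ((hA.inv.1).eigenvalues i)⁻¹ • ⇑((hA.inv.1).eigenvectorBasis i) := by
  have hμ : 0 < (hA.inv.1).eigenvalues i := hA.inv.eigenvalues_pos i
  have he := (hA.inv.1).mulVec_eigenvectorBasis i
  have hAv : A *ᵥ (A⁻¹ *ᵥ ⇑((hA.inv.1).eigenvectorBasis i)) = ⇑((hA.inv.1).eigenvectorBasis i) := by
    rw [mulVec_mulVec, Matrix.mul_nonsing_inv _ ((Matrix.isUnit_iff_isUnit_det A).mp hA.isUnit),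
      one_mulVec]
  rw [he, mulVec_smul] at hAv
  exact ((inv_smul_eq_iff₀ hμ.ne').mpr hAv.symm).symm

lemma maxEig_inv_le (hd : 0 < d) {A : Matrix (Fin d) (Fin d) ℝ} (hA : A.PosDef)
    {a : ℝ} (ha : 0 < a) (h : a ≤ minEig A) : maxEig A⁻¹ ≤ a⁻¹ := by
  obtain ⟨i, hi⟩ := exists_maxEig hd hA.inv.1
  set μ := (hA.inv.1).eigenvalues i with hμdef
  have hμ : 0 < μ := hA.inv.eigenvalues_pos i
  set v := ⇑((hA.inv.1).eigenvectorBasis i) with hv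
  have hvv : v ⬝ᵥ v = 1 := dot_self_eigenbasis _ i
  have hq : v ⬝ᵥ (A *ᵥ v) = μ⁻¹ := by
    rw [hv, inv_eig_vec hA i, dotProduct_smul, ← hv, hvv]; simp; rfl
  have h1 := quad_ge_min hA.1 v
  rw [hvv, mul_one, hq] at h1
  have h2 : a ≤ μ⁻¹ := le_trans h h1
  rw [← hi]
  have h3 : μ * a ≤ μ * μ⁻¹ := mul_le_mul_of_nonneg_left h2 hμ.le
  have h4 : μ * μ⁻¹ = 1 := mul_inv_cancel₀ hμ.ne'
  have h5 : a * a⁻¹ = 1 := mul_inv_cancel₀ ha.ne'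
  nlinarith

lemma minEig_inv_ge (hd : 0 < d) {A : Matrix (Fin d) (Fin d) ℝ} (hA : A.PosDef)
    {b : ℝ} (hb : 0 < b) (h : maxEig A ≤ b) : b⁻¹ ≤ minEig A⁻¹ := by
  obtain ⟨i, hi⟩ := exists_minEig hd hA.inv.1
  set μ := (hA.inv.1).eigenvalues i with hμdef
  have hμ : 0 < μ := hA.inv.eigenvalues_pos i
  set v := ⇑((hA.inv.1).eigenvectorBasis i) with hv
  have hvv : v ⬝ᵥ v = 1 := dot_self_eigenbasis _ i
  have hq : v ⬝ᵥ (A *ᵥ v) = μ⁻¹ := by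
    rw [hv, inv_eig_vec hA i, dotProduct_smul, ← hv, hvv]; simp; rfl
  have h1 := quad_le_max hA.1 v
  rw [hvv, mul_one, hq] at h1
  have h2 : μ⁻¹ ≤ b := le_trans h1 h
  rw [← hi]
  have h3 : μ * μ⁻¹ ≤ μ * b := mul_le_mul_of_nonneg_left h2 hμ.le
  have h4 : μ * μ⁻¹ = 1 := mul_inv_cancel₀ hμ.ne'
  have h5 : b * b⁻¹ = 1 := mul_inv_cancel₀ hb.ne'
  nlinarith

lemma maxEig_add_le (hd : 0 < d) {A B : Matrix (Fin d) (Fin d) ℝ}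
    (hA : A.IsHermitian) (hB : B.IsHermitian) : maxEig (A + B) ≤ maxEig A + maxEig B := by
  obtain ⟨i, hi⟩ := exists_maxEig hd (hA.add hB)
  rw [← hi, ← quad_eigen (hA.add hB) i]
  set v := ⇑((hA.add hB).eigenvectorBasis i) with hv
  have hvv : v ⬝ᵥ v = 1 := dot_self_eigenbasis _ i
  rw [add_mulVec, dotProduct_add]
  have := add_le_add (quad_le_max hA v) (quad_le_max hB v)
  rw [hvv, mul_one, mul_one] at this
  exact this

lemma maxEig_pos (hd : 0 < d) {A : Matrix (Fin d) (Fin d) ℝ} (hA : A.PosDef) :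
    0 < maxEig A := by
  obtain ⟨i, hi⟩ := exists_maxEig hd hA.1
  rw [← hi]
  exact hA.eigenvalues_pos i

end Aux

/-- Minimum-eigenvalue lower bound on the hyper-posterior precision (proof of Lemma 3):
if each task z in T is sufficiently explored (λ_d(G_z) ≥ η/σ²), then
λ_d(Σ_q⁻¹ + Σ_z (Σ₀ + G_z⁻¹)⁻¹) ≥ λ_d(Σ_q⁻¹) + |T| (λ₁(Σ₀) + σ²/η)⁻¹.
(Here Sq = Σ_q, S0 = Σ₀.) -/
theorem hyper_precision_min_eigenvalue_bound {d m : ℕ} (hd : 0 < d) (hm : 0 < m)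
    (σ η : ℝ) (hσ : 0 < σ) (hη : 0 < η)
    (Sq S0 : Matrix (Fin d) (Fin d) ℝ) (hSq : Sq.PosDef) (hS0 : S0.PosDef)
    (G : Fin m → Matrix (Fin d) (Fin d) ℝ) (hG : ∀ z, (G z).PosDef)
    (T : Finset (Fin m)) (hT : ∀ z ∈ T, η / σ ^ 2 ≤ minEig (G z)) :
    minEig Sq⁻¹ + T.card * (maxEig S0 + σ ^ 2 / η)⁻¹
      ≤ minEig (Sq⁻¹ + ∑ z, (S0 + (G z)⁻¹)⁻¹) := by
  set c : ℝ := (maxEig S0 + σ ^ 2 / η)⁻¹ with hc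
  set P : Fin m → Matrix (Fin d) (Fin d) ℝ := fun z => (S0 + (G z)⁻¹)⁻¹ with hPdef
  have hσ2 : 0 < σ ^ 2 := pow_pos hσ 2
  have hP : ∀ z, (P z).PosDef := fun z => (hS0.add (hG z).inv).inv
  have hb : 0 < maxEig S0 + σ ^ 2 / η := add_pos (maxEig_pos hd hS0) (div_pos hσ2 hη)
  -- per-task bound for z ∈ T
  have hPT : ∀ z ∈ T, c ≤ minEig (P z) := by
    intro z hz
    have h1 : maxEig (G z)⁻¹ ≤ (η / σ ^ 2)⁻¹ :=
      maxEig_inv_le hd (hG z) (div_pos hη hσ2) (hT z hz)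
    rw [inv_div] at h1
    have h2 : maxEig (S0 + (G z)⁻¹) ≤ maxEig S0 + σ ^ 2 / η :=
      le_trans (maxEig_add_le hd hS0.1 (hG z).inv.1) (by linarith)
    exact minEig_inv_ge hd (hS0.add (hG z).inv) hb h2
  -- hermitian-ness of the total matrix
  have hSum : (∑ z, P z).IsHermitian := by
    rw [Matrix.IsHermitian, conjTranspose_sum]
    exact Finset.sum_congr rfl fun z _ => (hP z).1
  have hN : (Sq⁻¹ + ∑ z, P z).IsHermitian := hSq.inv.1.add hSum
  obtain ⟨i, hi⟩ := exists_minEig hd hN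
  set v := ⇑(hN.eigenvectorBasis i) with hv
  have hvv : v ⬝ᵥ v = 1 := dot_self_eigenbasis _ i
  have hsplit : v ⬝ᵥ ((∑ z, P z) *ᵥ v) = ∑ z, v ⬝ᵥ (P z *ᵥ v) := by
    have hmv : (∑ z, P z) *ᵥ v = ∑ z, P z *ᵥ v := by
      ext j
      simp only [mulVec, dotProduct, Finset.sum_apply, Matrix.sum_apply, Finset.sum_mul]
      exact Finset.sum_comm
    rw [hmv, dotProduct]
    simp only [Finset.sum_apply, Finset.mul_sum]
    rw [Finset.sum_comm]
    simp [dotProduct]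
  have key : minEig (Sq⁻¹ + ∑ z, P z) = v ⬝ᵥ (Sq⁻¹ *ᵥ v) + ∑ z, v ⬝ᵥ (P z *ᵥ v) := by
    rw [← hi, ← quad_eigen hN i, add_mulVec, dotProduct_add, hsplit]
  rw [key]
  have hq1 : minEig Sq⁻¹ ≤ v ⬝ᵥ (Sq⁻¹ *ᵥ v) := by
    have := quad_ge_min hSq.inv.1 v
    rwa [hvv, mul_one] at this
  have hq2 : (T.card : ℝ) * c ≤ ∑ z, v ⬝ᵥ (P z *ᵥ v) := by
    calc (T.card : ℝ) * c = ∑ _z ∈ T, c := by rw [Finset.sum_const, nsmul_eq_mul]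
      _ ≤ ∑ z ∈ T, v ⬝ᵥ (P z *ᵥ v) := by
          refine Finset.sum_le_sum fun z hz => ?_
          have := quad_ge_min (hP z).1 v
          rw [hvv, mul_one] at this
          exact le_trans (hPT z hz) this
      _ ≤ ∑ z, v ⬝ᵥ (P z *ᵥ v) :=
          Finset.sum_le_sum_of_subset_of_nonneg (Finset.subset_univ T)
            (fun z _ _ => quad_nonneg_of_psd (hP z).posSemidef v)
  linarith
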